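/- For every integer k ≥ 1, disc₁(A_k) = ((k+1)/2^k) · binomial(k, ⌊(k+1)/2⌋), where A_k is the 2^k × 2^k discrete Haar basis matrix. Consequently disc₁(A_k) is of order √k. -/

import Mathlib

open scoped Kronecker

/-- The (normalized) L¹ discrepancy of a real matrix. -/
noncomputable def disc1 {m n : Type*} [Fintype m] [Fintype n] (A : Matrix m n ℝ) : ℝ :=
  sInf { t | ∃ x : n → ℝ, (∀ j, x j = 1 ∨ x j = -1) ∧
    t = (∑ i, |A.mulVec x i|) / (Fintype.card m : ℝ) }

/-- The `2^k × 2^k` discrete Haar basis matrix, defined recursively by `A_0 = [1]` and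
`A_k = [[A_{k-1}, I], [A_{k-1}, -I]]`. -/
noncomputable def haar : (k : ℕ) → Matrix (Fin (2 ^ k)) (Fin (2 ^ k)) ℝ
  | 0 => Matrix.of fun _ _ => 1
  | k + 1 =>
      Matrix.reindex
        ((finSumFinEquiv (m := 2 ^ k) (n := 2 ^ k)).trans (finCongr (by rw [pow_succ, mul_two])))
        ((finSumFinEquiv (m := 2 ^ k) (n := 2 ^ k)).trans (finCongr (by rw [pow_succ, mul_two])))
        (Matrix.fromBlocks (haar k) (1 : Matrix (Fin (2 ^ k)) (Fin (2 ^ k)) ℝ)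
          (haar k) (-1 : Matrix (Fin (2 ^ k)) (Fin (2 ^ k)) ℝ))

/-!
For a sign vector `x`, write `A_{k+1} x = (A_k y + z, A_k y - z)` with sign vectors `y, z`. For
`z_i = ±1` the pair `{|u + z_i|, |u - z_i|}` is `{|u + 1|, |u - 1|}` whatever the sign, so by induction
`|A_k x|` takes the value `|k + 1 - 2j|` exactly `C(k, j)` times, for every sign vector `x`. Hence all
sign vectors give the same L¹ norm, `disc₁(A_k) = 2⁻ᵏ ∑ⱼ C(k, j) |k + 1 - 2j|`, and Pascal's rule
evaluates this sum to `(k + 1) C(k, ⌊(k + 1)/2⌋) / 2ᵏ = (2t + 1) C(2t, t) / 4ᵗ` with `t = ⌊k/2⌋`.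
The order `√k` follows from `(t + 1) C(2t, t)² ≤ 16ᵗ ≤ (4t + 1) C(2t, t)²`.
-/

open Finset Matrix Nat

def haarBlockEquiv (k : ℕ) : Fin (2 ^ k) ⊕ Fin (2 ^ k) ≃ Fin (2 ^ (k + 1)) :=
  finSumFinEquiv.trans (finCongr (by rw [pow_succ, mul_two]))

theorem haar_succ (k : ℕ) :
    haar (k + 1) = reindex (haarBlockEquiv k) (haarBlockEquiv k)
      (fromBlocks (haar k) 1 (haar k) (-1)) :=
  rfl

theorem sum_haar_succ_mulVec {M : Type*} [AddCommMonoid M] (g : ℝ → M) (k : ℕ)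
    (x : Fin (2 ^ (k + 1)) → ℝ) :
    ∑ i, g ((haar (k + 1) *ᵥ x) i) =
      ∑ i, (g ((haar k *ᵥ (x ∘ haarBlockEquiv k ∘ Sum.inl)) i + x (haarBlockEquiv k (Sum.inr i))) +
        g ((haar k *ᵥ (x ∘ haarBlockEquiv k ∘ Sum.inl)) i - x (haarBlockEquiv k (Sum.inr i)))) := by
  rw [haar_succ, reindex_apply, submatrix_mulVec_equiv, ← (haarBlockEquiv k).sum_comp,
    Fintype.sum_sum_type, ← sum_add_distrib]
  have hx : x ∘ haarBlockEquiv k =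
      Sum.elim (x ∘ haarBlockEquiv k ∘ Sum.inl) (x ∘ haarBlockEquiv k ∘ Sum.inr) := by
    ext (i | i) <;> rfl
  simp [hx, fromBlocks_mulVec, neg_mulVec, sub_eq_add_neg]

theorem sum_comp_haar_mulVec {g : ℝ → ℝ} (hg : g.Even) (k : ℕ) {x : Fin (2 ^ k) → ℝ}
    (hx : ∀ j, x j = 1 ∨ x j = -1) :
    ∑ i, g ((haar k *ᵥ x) i) = ∑ j ∈ range (k + 1), (k.choose j : ℝ) * g (k + 1 - 2 * j) := by
  induction k generalizing g with
  | zero =>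
    have hx0 : (haar 0 *ᵥ x) 0 = x 0 := by simp [haar, mulVec, dotProduct]
    rcases hx 0 with h | h <;> simp [hx0, h, ← hg 1]
  | succ k ih =>
    have hg' : (fun t => g (t + 1) + g (t - 1)).Even := fun t => by
      show g (-t + 1) + g (-t - 1) = _
      rw [show -t + 1 = -(t - 1) by ring, show -t - 1 = -(t + 1) by ring, hg, hg, add_comm]
    have hsign : ∀ u s, (s = 1 ∨ s = -1) → g (u + s) + g (u - s) = g (u + 1) + g (u - 1) := by
      rintro u s (rfl | rfl)
      · rfl
      · rw [sub_neg_eq_add, ← sub_eq_add_neg, add_comm]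
    simp only [sum_haar_succ_mulVec, hsign _ _ (hx _)]
    rw [ih hg' (x := x ∘ haarBlockEquiv k ∘ Sum.inl) fun j => hx _,
      sum_choose_succ_mul (fun i _ => g ((k + 1 : ℕ) + 1 - 2 * i)), ← sum_add_distrib]
    refine sum_congr rfl fun j _ => ?_
    push_cast
    ring_nf

theorem disc1_eq_of_forall_sign {m n : Type*} [Fintype m] [Fintype n] (A : Matrix m n ℝ) (c : ℝ)
    (h : ∀ x : n → ℝ, (∀ j, x j = 1 ∨ x j = -1) → ∑ i, |(A *ᵥ x) i| = c) :
    disc1 A = c / Fintype.card m := by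
  rw [disc1, ← csInf_singleton (c / Fintype.card m)]
  congr 1
  refine Set.eq_singleton_iff_unique_mem.2 ⟨?_, ?_⟩
  · exact ⟨fun _ => 1, fun _ => Or.inl rfl, by rw [h _ fun _ => Or.inl rfl]⟩
  · rintro t ⟨x, hx, rfl⟩
    rw [h x hx]

theorem disc1_haar_eq_sum (k : ℕ) :
    disc1 (haar k) = (∑ j ∈ range (k + 1), (k.choose j : ℝ) * |(k : ℝ) + 1 - 2 * j|) / 2 ^ k := by
  rw [disc1_eq_of_forall_sign _ _ fun x hx => sum_comp_haar_mulVec (g := abs) abs_neg k hx,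
    Fintype.card_fin, Nat.cast_pow, Nat.cast_ofNat]

theorem abs_add_one_add_abs_sub_one (a : ℤ) :
    |a + 1| + |a - 1| = 2 * |a| + if a = 0 then 2 else 0 := by
  split_ifs with h
  · simp [h]
  · rcases lt_or_gt_of_ne h with h | h
    · rw [abs_of_nonpos (by omega), abs_of_neg (by omega), abs_of_neg h]; ring
    · rw [abs_of_pos (by omega), abs_of_nonneg (by omega), abs_of_pos h]; ring

theorem sum_choose_mul_abs_succ (k : ℕ) :
    ∑ j ∈ range (k + 2), ((k + 1).choose j : ℤ) * |(k + 1 : ℕ) + 1 - 2 * (j : ℤ)| =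
      2 * ∑ j ∈ range (k + 1), (k.choose j : ℤ) * |k + 1 - 2 * (j : ℤ)| +
        ∑ j ∈ range (k + 1), if (k : ℤ) + 1 - 2 * j = 0 then 2 * (k.choose j : ℤ) else 0 := by
  rw [sum_choose_succ_mul (fun i _ => |(k + 1 : ℕ) + 1 - 2 * (i : ℤ)|), ← sum_add_distrib, mul_sum,
    ← sum_add_distrib]
  refine sum_congr rfl fun j _ => ?_
  have h := abs_add_one_add_abs_sub_one ((k : ℤ) + 1 - 2 * j)
  push_cast
  rw [show (k : ℤ) + 1 + 1 - 2 * j = k + 1 - 2 * j + 1 by ring,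
    show (k : ℤ) + 1 + 1 - 2 * (j + 1) = k + 1 - 2 * j - 1 by ring]
  split_ifs at h ⊢ <;> linear_combination (k.choose j : ℤ) * h

theorem sum_choose_mul_abs (k : ℕ) :
    ∑ j ∈ range (k + 1), (k.choose j : ℤ) * |k + 1 - 2 * (j : ℤ)| =
      (k + 1) * k.choose ((k + 1) / 2) := by
  induction k with
  | zero => simp
  | succ k ih =>
    rw [sum_choose_mul_abs_succ, ih]
    obtain ⟨t, rfl | rfl⟩ := Nat.even_or_odd' k
    · rw [sum_eq_zero fun j _ => if_neg (by omega),
        show (2 * t + 1) / 2 = t by omega, show (2 * t + 1 + 1) / 2 = t + 1 by omega]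
      have h := congrArg (Nat.cast (R := ℤ)) (add_one_mul_choose_eq (2 * t) t)
      push_cast at h ⊢
      linear_combination 2 * h
    · rw [sum_eq_single_of_mem (t + 1) (mem_range.2 (by omega)) fun j _ hj => if_neg (by omega),
        if_pos (by push_cast; ring), show (2 * t + 1 + 1) / 2 = t + 1 by omega,
        show (2 * t + 1 + 1 + 1) / 2 = t + 1 by omega]
      have h : (2 * t + 1 + 1).choose (t + 1) = 2 * (2 * t + 1).choose (t + 1) := by
        rw [choose_succ_succ', ← choose_symm_half]
        ring
      rw [h]
      push_cast
      ring

theorem disc1_haar (k : ℕ) : disc1 (haar k) = ((k : ℝ) + 1) / 2 ^ k * k.choose ((k + 1) / 2) := by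
  have h := congrArg (Int.cast (R := ℝ)) (sum_choose_mul_abs k)
  push_cast at h
  rw [disc1_haar_eq_sum, h]
  ring

theorem succ_div_two_pow_mul_choose_half {k t : ℕ} (hk : k = 2 * t ∨ k = 2 * t + 1) :
    ((k : ℝ) + 1) / 2 ^ k * k.choose ((k + 1) / 2) = (2 * t + 1) * centralBinom t / 4 ^ t := by
  have h4 : (4 : ℝ) ^ t = 2 ^ (2 * t) := by rw [pow_mul]; norm_num
  rw [centralBinom_eq_two_mul_choose, h4]
  rcases hk with rfl | rfl
  · rw [show (2 * t + 1) / 2 = t by omega]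
    push_cast
    ring
  · have h := congrArg (Nat.cast (R := ℝ)) (add_one_mul_choose_eq (2 * t) t)
    rw [show (2 * t + 1 + 1) / 2 = t + 1 by omega, pow_succ]
    push_cast at h ⊢
    field_simp
    linear_combination -2 * h

theorem sixteen_pow_le_mul_centralBinom_sq (t : ℕ) : 16 ^ t ≤ (4 * t + 1) * centralBinom t ^ 2 := by
  induction t with
  | zero => simp
  | succ t ih =>
    refine Nat.le_of_mul_le_mul_left ?_ (show 0 < (t + 1) ^ 2 by positivity)
    calc (t + 1) ^ 2 * 16 ^ (t + 1) = 16 * (t + 1) ^ 2 * 16 ^ t := by ring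
      _ ≤ 16 * (t + 1) ^ 2 * ((4 * t + 1) * centralBinom t ^ 2) := Nat.mul_le_mul_left _ ih
      _ = 4 * (t + 1) ^ 2 * (4 * t + 1) * (4 * centralBinom t ^ 2) := by ring
      _ ≤ (4 * t + 5) * (2 * t + 1) ^ 2 * (4 * centralBinom t ^ 2) :=
        Nat.mul_le_mul_right _ (by nlinarith)
      _ = (4 * (t + 1) + 1) * ((t + 1) * centralBinom (t + 1)) ^ 2 := by
        rw [succ_mul_centralBinom_succ]; ring
      _ = (t + 1) ^ 2 * ((4 * (t + 1) + 1) * centralBinom (t + 1) ^ 2) := by ring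

theorem succ_mul_centralBinom_sq_le (t : ℕ) : (t + 1) * centralBinom t ^ 2 ≤ 16 ^ t := by
  induction t with
  | zero => simp
  | succ t ih =>
    refine Nat.le_of_mul_le_mul_left ?_ (show 0 < (t + 1) ^ 2 by positivity)
    calc (t + 1) ^ 2 * ((t + 1 + 1) * centralBinom (t + 1) ^ 2)
        = (t + 2) * ((t + 1) * centralBinom (t + 1)) ^ 2 := by ring
      _ = 4 * (t + 2) * (2 * t + 1) ^ 2 * centralBinom t ^ 2 := by
        rw [succ_mul_centralBinom_succ]; ring
      _ ≤ 16 * (t + 1) ^ 3 * centralBinom t ^ 2 := Nat.mul_le_mul_right _ (by nlinarith)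
      _ = 16 * (t + 1) ^ 2 * ((t + 1) * centralBinom t ^ 2) := by ring
      _ ≤ 16 * (t + 1) ^ 2 * 16 ^ t := Nat.mul_le_mul_left _ ih
      _ = (t + 1) ^ 2 * 16 ^ (t + 1) := by ring

theorem sq_mul_centralBinom_div_four_pow_bounds (t : ℕ) :
    (2 * t + 1 : ℝ) / 2 ≤ ((2 * t + 1) * centralBinom t / 4 ^ t) ^ 2 ∧
      ((2 * t + 1) * centralBinom t / 4 ^ t : ℝ) ^ 2 ≤ 4 * t + 1 := by
  have hlo : (16 ^ t : ℝ) ≤ (4 * t + 1) * centralBinom t ^ 2 := by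
    exact_mod_cast sixteen_pow_le_mul_centralBinom_sq t
  have hhi : (t + 1) * (centralBinom t : ℝ) ^ 2 ≤ 16 ^ t := by
    exact_mod_cast succ_mul_centralBinom_sq_le t
  have h16 : ((4 : ℝ) ^ t) ^ 2 = 16 ^ t := by rw [← pow_mul, mul_comm, pow_mul]; norm_num
  have ht : (0 : ℝ) ≤ t := t.cast_nonneg
  rw [div_pow, h16, mul_pow, le_div_iff₀ (by positivity), div_le_iff₀ (by positivity)]
  constructor
  · nlinarith [mul_le_mul_of_nonneg_left hlo (by positivity : (0 : ℝ) ≤ 2 * t + 1),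
      mul_nonneg ht (sq_nonneg (centralBinom t : ℝ))]
  · nlinarith [mul_le_mul_of_nonneg_left hhi (by positivity : (0 : ℝ) ≤ 4 * t + 1),
      mul_nonneg ht (sq_nonneg (centralBinom t : ℝ))]

/-- For every integer `k ≥ 1`, `disc₁ (A_k) = ((k+1)/2^k) · C(k, ⌊(k+1)/2⌋)`;
consequently `disc₁ (A_k)` is of order `√k`. -/
theorem stmt9 :
    (∀ k : ℕ, 1 ≤ k →
      disc1 (haar k) = ((k : ℝ) + 1) / 2 ^ k * (Nat.choose k ((k + 1) / 2) : ℝ)) ∧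
    ∃ c₁ c₂ : ℝ, 0 < c₁ ∧ 0 < c₂ ∧ ∀ k : ℕ, 1 ≤ k →
      c₁ * Real.sqrt k ≤ disc1 (haar k) ∧ disc1 (haar k) ≤ c₂ * Real.sqrt k := by
  refine ⟨fun k _ => disc1_haar k, 1 / 2, 2, by norm_num, by norm_num, fun k hk => ?_⟩
  obtain ⟨t, ht⟩ := Nat.even_or_odd' k
  obtain ⟨hlo, hhi⟩ := sq_mul_centralBinom_div_four_pow_bounds t
  have hkt : (k : ℝ) ≤ 2 * t + 1 ∧ 4 * t + 1 ≤ 4 * (k : ℝ) := by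
    constructor <;> norm_cast <;> omega
  have hD : 0 ≤ ((2 * t + 1) * centralBinom t / 4 ^ t : ℝ) := by positivity
  rw [disc1_haar, succ_div_two_pow_mul_choose_half ht]
  constructor
  · refine (pow_le_pow_iff_left₀ (by positivity) hD two_ne_zero).1 ?_
    rw [mul_pow, Real.sq_sqrt k.cast_nonneg]
    linarith
  · refine (pow_le_pow_iff_left₀ hD (by positivity) two_ne_zero).1 ?_
    rw [mul_pow, Real.sq_sqrt k.cast_nonneg]
    linarith
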